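/- arXiv:1309.3551 — 2 statements merged into one kernel-verified Lean document; each statement's English description precedes it below -/
import Mathlib

section
/- The number of combinatorially distinct trivalent trees with m ≥ 3 labelled external legs equals (2m − 5)!!, the double factorial of 2m − 5. -/
/-!
Removing the last leaf of a trivalent tree with `m + 1` leaves, together with its neighbour
(necessarily internal) and joining the two other neighbours of that vertex, yields a trivalent
tree with `m` leaves and a marked edge; conversely, subdividing an edge and hanging the new leaf
on the new vertex inverts this. By the same induction, an automorphism fixing all leaves is
trivial, so leaf-labelled isomorphism classes with `m + 1` leaves correspond bijectively to pairs
(class with `m` leaves, edge of a representative). A tree with `m` leaves has `2m - 3` edges,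
whence `N(m + 1) = (2m - 3) N(m)` with `N(2) = 1`.
-/

/-- A trivalent tree with `m` labelled leaves: a tree on the vertex set
`Fin m ⊕ Fin (m - 2)` (leaves `Sum.inl i`, internal vertices `Sum.inr j`)
in which every leaf has degree `1` and every internal vertex has degree `3`. -/
def IsTrivalentLeafTree (m : ℕ) (G : SimpleGraph (Fin m ⊕ Fin (m - 2))) : Prop :=
  G.IsTree ∧ (∀ i : Fin m, (G.neighborSet (Sum.inl i)).ncard = 1) ∧
    (∀ j : Fin (m - 2), (G.neighborSet (Sum.inr j)).ncard = 3)

/-- Two trivalent leaf-labelled trees are combinatorially equivalent if there is a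
graph isomorphism between them fixing each labelled leaf. -/
def LeafLabelledIso (m : ℕ) (G H : {G : SimpleGraph (Fin m ⊕ Fin (m - 2)) //
    IsTrivalentLeafTree m G}) : Prop :=
  ∃ e : G.1 ≃g H.1, ∀ i : Fin m, e (Sum.inl i) = Sum.inl i

open SimpleGraph Sum

namespace SimpleGraph

variable {V W : Type*} {G : SimpleGraph V}

theorem Reachable.map_of_adj {H : SimpleGraph W} (f : V → W)
    (h : ∀ a b, G.Adj a b → H.Reachable (f a) (f b)) {u v : V} (huv : G.Reachable u v) :
    H.Reachable (f u) (f v) := by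
  rw [reachable_iff_reflTransGen] at huv ⊢
  exact Relation.ReflTransGen.lift' f
    (fun a b hab ↦ (reachable_iff_reflTransGen _ _).1 (h a b hab)) _ _ huv

theorem Reachable.mem_of_forall_adj {S : Set V} (hS : ∀ a b, G.Adj a b → a ∈ S → b ∈ S)
    {u v : V} (h : G.Reachable u v) (hu : u ∈ S) : v ∈ S := by
  rw [reachable_iff_reflTransGen] at h
  induction h with
  | refl => exact hu
  | tail _ hab ih => exact hS _ _ hab ih

theorem IsAcyclic.not_adj_of_adj_of_adj (hG : G.IsAcyclic) {a b c : V} (hab : G.Adj a b)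
    (hac : G.Adj a c) : ¬ G.Adj b c := by
  intro h
  refine isAcyclic_iff_forall_adj_isBridge.1 hG h ?_
  have hba : (G.deleteEdges {s(b, c)}).Adj b a := by simp [hab.symm, hab.ne, hac.ne]
  have hac' : (G.deleteEdges {s(b, c)}).Adj a c := by simp [hac, hab.ne, hac.ne]
  exact hba.reachable.trans hac'.reachable

end SimpleGraph

namespace SimpleGraph.Iso

variable {α β : Type*} {G H K : SimpleGraph (α ⊕ β)}

def FixesLeaves (φ : G ≃g H) : Prop := ∀ i, φ (inl i) = inl i

theorem FixesLeaves.symm {φ : G ≃g H} (hφ : φ.FixesLeaves) : FixesLeaves φ.symm :=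
  fun i ↦ φ.toEquiv.symm_apply_eq.2 (hφ i).symm

theorem FixesLeaves.trans {φ : G ≃g H} {ψ : H ≃g K} (hφ : φ.FixesLeaves)
    (hψ : ψ.FixesLeaves) : FixesLeaves (φ.trans ψ) :=
  fun i ↦ by simp [hφ i, hψ i]

theorem FixesLeaves.exists_apply_inr {φ : G ≃g H} (hφ : φ.FixesLeaves) (j : β) :
    ∃ j', φ (inr j) = inr j' := by
  rcases h : φ (inr j) with i | j'
  · exact absurd (φ.injective (h.trans (hφ i).symm)) (by simp)
  · exact ⟨j', rfl⟩

theorem ncard_neighborSet (φ : G ≃g H) (v : α ⊕ β) :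
    (H.neighborSet (φ v)).ncard = (G.neighborSet v).ncard := by
  rw [← Nat.card_coe_set_eq, ← Nat.card_coe_set_eq]
  exact Nat.card_congr (φ.mapNeighborSet v).symm

end SimpleGraph.Iso

open SimpleGraph.Iso

section LeafLabelledIso

variable {m : ℕ} {G H : SimpleGraph (Fin m ⊕ Fin (m - 2))}

theorem IsTrivalentLeafTree.of_iso (hG : IsTrivalentLeafTree m G) (φ : G ≃g H)
    (hφ : φ.FixesLeaves) : IsTrivalentLeafTree m H := by
  obtain ⟨htree, hleaf, hint⟩ := hG
  refine ⟨φ.isTree_iff.1 htree, fun i ↦ ?_, fun j ↦ ?_⟩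
  · rw [← hφ i, φ.ncard_neighborSet]
    exact hleaf i
  · obtain ⟨j', hj'⟩ := hφ.symm.exists_apply_inr j
    rw [← φ.apply_symm_apply (inr j), hj', φ.ncard_neighborSet]
    exact hint j'

theorem leafLabelledIso_equivalence : Equivalence (LeafLabelledIso m) where
  refl _ := ⟨Iso.refl, fun _ ↦ rfl⟩
  symm := fun ⟨φ, hφ⟩ ↦ ⟨φ.symm, FixesLeaves.symm hφ⟩
  trans := fun ⟨φ, hφ⟩ ⟨ψ, hψ⟩ ↦ ⟨φ.trans ψ, FixesLeaves.trans hφ hψ⟩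

theorem quot_mk_leafLabelledIso_eq_iff
    {T T' : {G : SimpleGraph (Fin m ⊕ Fin (m - 2)) // IsTrivalentLeafTree m G}} :
    Quot.mk (LeafLabelledIso m) T = Quot.mk _ T' ↔ LeafLabelledIso m T T' :=
  Quot.eq.trans leafLabelledIso_equivalence.eqvGen_iff

end LeafLabelledIso

/-- The vertex type `Fin m ⊕ Fin (m - 2)` of a tree with `m = k + 2` leaves, indexed by `k` to
avoid truncated subtraction. -/
abbrev Vert (k : ℕ) : Type := Fin (k + 2) ⊕ Fin k

namespace Vert

variable {k : ℕ}

def up : Vert k → Vert (k + 1) := Sum.map Fin.castSucc Fin.castSucc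

def newLeaf (k : ℕ) : Vert (k + 1) := inl (Fin.last _)

def newNode (k : ℕ) : Vert (k + 1) := inr (Fin.last _)

theorem up_injective : Function.Injective (up (k := k)) :=
  Sum.map_injective.2 ⟨Fin.castSucc_injective _, Fin.castSucc_injective _⟩

@[simp] theorem up_inj {u v : Vert k} : up u = up v ↔ u = v := up_injective.eq_iff

theorem up_inl (i : Fin (k + 2)) : up (inl i) = inl i.castSucc := rfl

theorem up_inr (j : Fin k) : up (inr j) = inr j.castSucc := rfl

@[simp] theorem up_ne_newLeaf (v : Vert k) : up v ≠ newLeaf k := by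
  rcases v with i | i <;> simp [up, newLeaf, Fin.castSucc_ne_last]

@[simp] theorem up_ne_newNode (v : Vert k) : up v ≠ newNode k := by
  rcases v with i | i <;> simp [up, newNode, Fin.castSucc_ne_last]

@[simp] theorem newLeaf_ne_up (v : Vert k) : newLeaf k ≠ up v := (up_ne_newLeaf v).symm

@[simp] theorem newNode_ne_up (v : Vert k) : newNode k ≠ up v := (up_ne_newNode v).symm

@[simp] theorem newLeaf_ne_newNode : newLeaf k ≠ newNode k := by simp [newLeaf, newNode]

@[simp] theorem newNode_ne_newLeaf : newNode k ≠ newLeaf k := newLeaf_ne_newNode.symm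

theorem eq_newLeaf_or_eq_newNode_or_eq_up (p : Vert (k + 1)) :
    p = newLeaf k ∨ p = newNode k ∨ ∃ v, p = up v := by
  rcases p with i | i <;> rcases Fin.eq_castSucc_or_eq_last i with ⟨j, rfl⟩ | rfl
  exacts [.inr (.inr ⟨inl j, rfl⟩), .inl rfl, .inr (.inr ⟨inr j, rfl⟩), .inr (.inl rfl)]

theorem exists_up_eq {p : Vert (k + 1)} (hL : p ≠ newLeaf k) (hN : p ≠ newNode k) :
    ∃ v, up v = p := by
  rcases eq_newLeaf_or_eq_newNode_or_eq_up p with h | h | ⟨v, rfl⟩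
  exacts [absurd h hL, absurd h hN, ⟨v, rfl⟩]

theorem isTrivalentLeafTree_iff {G : SimpleGraph (Vert k)} :
    IsTrivalentLeafTree (k + 2) G ↔ G.IsTree ∧ (∀ i, (G.neighborSet (inl i)).ncard = 1) ∧
      ∀ j, (G.neighborSet (inr j)).ncard = 3 :=
  Iff.rfl

theorem card : Nat.card (Vert k) = 2 * k + 2 := by
  simp only [Nat.card_eq_fintype_card, Fintype.card_sum, Fintype.card_fin]; ring

theorem card_edgeSet_of_isTree {G : SimpleGraph (Vert k)} (hG : G.IsTree) :
    Nat.card G.edgeSet = 2 * k + 1 := by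
  have := (isTree_iff_connected_and_card.1 hG).2
  rw [card] at this
  omega

noncomputable def down (x : Vert k) : Vert (k + 1) → Vert k := Function.extend up id fun _ ↦ x

@[simp] theorem down_up (x v : Vert k) : down x (up v) = v :=
  up_injective.extend_apply _ _ v

@[simp] theorem down_newLeaf (x : Vert k) : down x (newLeaf k) = x :=
  Function.extend_apply' _ _ _ (by simp [eq_comm])

@[simp] theorem down_newNode (x : Vert k) : down x (newNode k) = x :=
  Function.extend_apply' _ _ _ (by simp [eq_comm])

variable {G : SimpleGraph (Vert k)} {e : Sym2 (Vert k)}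

def subdivide (G : SimpleGraph (Vert k)) (e : Sym2 (Vert k)) : SimpleGraph (Vert (k + 1)) :=
  fromEdgeSet (Sym2.map up '' (G.edgeSet \ {e}) ∪
    insert s(newNode k, newLeaf k) {f | ∃ z ∈ e, s(newNode k, up z) = f})

@[simp] theorem map_up_ne_newNode (f : Sym2 (Vert k)) (q : Vert (k + 1)) :
    Sym2.map up f ≠ s(newNode k, q) := by
  intro h
  have h' := Sym2.mem_mk_left (newNode k) q
  rw [← h] at h'
  simp [Sym2.mem_map] at h'

@[simp] theorem map_up_ne_newLeaf (f : Sym2 (Vert k)) (q : Vert (k + 1)) :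
    Sym2.map up f ≠ s(newLeaf k, q) := by
  intro h
  have h' := Sym2.mem_mk_left (newLeaf k) q
  rw [← h] at h'
  simp [Sym2.mem_map] at h'

@[simp] theorem subdivide_adj_up_up {u v : Vert k} :
    (subdivide G e).Adj (up u) (up v) ↔ G.Adj u v ∧ s(u, v) ≠ e := by
  rw [subdivide, fromEdgeSet_adj, ← Sym2.map_mk, Set.mem_union,
    (Sym2.map.injective up_injective).mem_set_image]
  simp +contextual [Sym2.map_mk, G.ne_of_adj]

@[simp] theorem subdivide_adj_newNode {q : Vert (k + 1)} :
    (subdivide G e).Adj (newNode k) q ↔ q = newLeaf k ∨ ∃ z ∈ e, up z = q := by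
  simp [subdivide, -Sum.exists]
  aesop

@[simp] theorem subdivide_adj_newLeaf {q : Vert (k + 1)} :
    (subdivide G e).Adj (newLeaf k) q ↔ q = newNode k := by
  simp +contextual [subdivide, -Sum.exists]

theorem neighborSet_subdivide_newLeaf : (subdivide G e).neighborSet (newLeaf k) = {newNode k} := by
  ext; simp

theorem neighborSet_subdivide_newNode {x y : Vert k} :
    (subdivide G s(x, y)).neighborSet (newNode k) = {newLeaf k, up x, up y} := by
  ext; simp [eq_comm]

@[simp] theorem subdivide_adj_up_newNode {v : Vert k} :
    (subdivide G e).Adj (up v) (newNode k) ↔ v ∈ e := by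
  rw [adj_comm]; simp

@[simp] theorem subdivide_adj_up_newLeaf {v : Vert k} :
    ¬ (subdivide G e).Adj (up v) (newLeaf k) := by
  rw [adj_comm]; simp

theorem neighborSet_subdivide_up (v : Vert k) : (subdivide G e).neighborSet (up v) =
    up '' {w | G.Adj v w ∧ s(v, w) ≠ e} ∪ {p | p = newNode k ∧ v ∈ e} := by
  ext p
  rcases eq_newLeaf_or_eq_newNode_or_eq_up p with rfl | rfl | ⟨w, rfl⟩
  · simp [adj_comm]
  · simp
  · simp [up_injective.mem_set_image]

theorem ncard_neighborSet_subdivide_up (he : e ∈ G.edgeSet) (v : Vert k) :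
    ((subdivide G e).neighborSet (up v)).ncard = (G.neighborSet v).ncard := by
  rw [neighborSet_subdivide_up]
  by_cases hv : v ∈ e
  · obtain ⟨w, rfl⟩ := Sym2.mem_iff_exists.1 hv
    have hw : w ∈ G.neighborSet v := he
    have hset : {w' | G.Adj v w' ∧ s(v, w') ≠ s(v, w)} = G.neighborSet v \ {w} := by
      ext; simp [G.ne_of_adj hw]
    have hNN : {p | p = newNode k ∧ v ∈ s(v, w)} = {newNode k} := by ext; simp
    rw [hset, hNN, Set.union_singleton, Set.ncard_insert_of_notMem (by simp),
      Set.ncard_image_of_injective _ up_injective, Set.ncard_sdiff_singleton_add_one hw]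
  · have hset : {w | G.Adj v w ∧ s(v, w) ≠ e} = G.neighborSet v := by
      ext w
      refine ⟨And.left, fun h ↦ ⟨h, ?_⟩⟩
      rintro rfl
      exact hv (Sym2.mem_mk_left v w)
    simp [hset, hv, Set.ncard_image_of_injective _ up_injective]

theorem ncard_edgeSet_subdivide {x y : Vert k} (h : G.Adj x y) :
    (subdivide G s(x, y)).edgeSet.ncard = G.edgeSet.ncard + 2 := by
  have hset : (subdivide G s(x, y)).edgeSet = Sym2.map up '' (G.edgeSet \ {s(x, y)}) ∪
      {s(newNode k, newLeaf k), s(newNode k, up x), s(newNode k, up y)} := by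
    rw [subdivide, edgeSet_fromEdgeSet, sdiff_eq_self_iff_disjoint.2]
    · congr 2; ext; simp [eq_comm]
    · rw [Set.disjoint_left]
      rintro f hd hf
      rcases hf with ⟨f, ⟨hf, -⟩, rfl⟩ | rfl | ⟨z, -, rfl⟩ <;> simp at hd
      exact G.not_isDiag_of_mem_edgeSet hf (by simpa [Sym2.isDiag_map up_injective] using hd)
  have hdisj : Disjoint (Sym2.map up '' (G.edgeSet \ {s(x, y)}))
      {s(newNode k, newLeaf k), s(newNode k, up x), s(newNode k, up y)} := by
    rw [Set.disjoint_left]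
    rintro _ ⟨f, -, rfl⟩
    simp
  have hthree : ({s(newNode k, newLeaf k), s(newNode k, up x), s(newNode k, up y)} :
      Set (Sym2 (Vert (k + 1)))).ncard = 3 :=
    Set.ncard_eq_three.2 ⟨_, _, _, by simp, by simp, by simp [h.ne], rfl⟩
  have hdel := Set.ncard_sdiff_singleton_add_one (G.mem_edgeSet.2 h)
  rw [hset, Set.ncard_union_eq hdisj, Set.ncard_image_of_injective _
    (Sym2.map.injective up_injective), hthree]
  omega

theorem connected_subdivide_iff {x y : Vert k} (h : G.Adj x y) :
    (subdivide G s(x, y)).Connected ↔ G.Connected := by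
  have hx : (subdivide G s(x, y)).Adj (up x) (newNode k) := by simp
  have hy : (subdivide G s(x, y)).Adj (up y) (newNode k) := by simp
  constructor
  · intro hS
    have hdown : ∀ p q, (subdivide G s(x, y)).Adj p q → G.Reachable (down x p) (down x q) := by
      intro p q hpq
      rcases eq_newLeaf_or_eq_newNode_or_eq_up p with rfl | rfl | ⟨a, rfl⟩ <;>
      rcases eq_newLeaf_or_eq_newNode_or_eq_up q with rfl | rfl | ⟨b, rfl⟩
      all_goals simp at hpq ⊢
      · rcases hpq with rfl | rfl
        exacts [.rfl, h.reachable]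
      · rcases hpq with rfl | rfl
        exacts [.rfl, h.symm.reachable]
      · exact hpq.1.reachable
    exact Connected.mk fun u v ↦ by
      simpa using (hS.preconnected (up u) (up v)).map_of_adj (down x) hdown
  · intro hG
    have hup : ∀ a b, G.Adj a b → (subdivide G s(x, y)).Reachable (up a) (up b) := by
      intro a b hab
      by_cases hab' : s(a, b) = s(x, y)
      · rcases Sym2.eq_iff.1 hab' with ⟨rfl, rfl⟩ | ⟨rfl, rfl⟩
        exacts [hx.reachable.trans hy.reachable.symm, hy.reachable.trans hx.reachable.symm]
      · exact (subdivide_adj_up_up.2 ⟨hab, hab'⟩).reachable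
    have hN : ∀ p, (subdivide G s(x, y)).Reachable p (newNode k) := by
      intro p
      rcases eq_newLeaf_or_eq_newNode_or_eq_up p with rfl | rfl | ⟨v, rfl⟩
      · exact (subdivide_adj_newLeaf.2 rfl).reachable
      · rfl
      · exact ((hG.preconnected v x).map_of_adj up hup).trans hx.reachable
    exact Connected.mk fun p q ↦ (hN p).trans (hN q).symm

theorem isTree_subdivide_iff {x y : Vert k} (h : G.Adj x y) :
    (subdivide G s(x, y)).IsTree ↔ G.IsTree := by
  simp only [isTree_iff_connected_and_card, connected_subdivide_iff h, Nat.card_coe_set_eq,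
    ncard_edgeSet_subdivide h, card]
  exact and_congr_right fun _ ↦ by omega

theorem isTrivalentLeafTree_subdivide_iff {x y : Vert k} (h : G.Adj x y) :
    IsTrivalentLeafTree (k + 1 + 2) (subdivide G s(x, y)) ↔ IsTrivalentLeafTree (k + 2) G := by
  have hN : ((subdivide G s(x, y)).neighborSet (inr (Fin.last k))).ncard = 3 := by
    change ((subdivide G s(x, y)).neighborSet (newNode k)).ncard = 3
    rw [neighborSet_subdivide_newNode]
    exact Set.ncard_eq_three.2 ⟨_, _, _, by simp, by simp, by simp [h.ne], rfl⟩
  have hL : ((subdivide G s(x, y)).neighborSet (inl (Fin.last (k + 2)))).ncard = 1 := by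
    change ((subdivide G s(x, y)).neighborSet (newLeaf k)).ncard = 1
    simp [neighborSet_subdivide_newLeaf]
  rw [isTrivalentLeafTree_iff, isTrivalentLeafTree_iff, isTree_subdivide_iff h,
    Fin.forall_fin_succ' (n := k + 2), Fin.forall_fin_succ' (n := k)]
  simp only [← up_inl, ← up_inr, ncard_neighborSet_subdivide_up (G.mem_edgeSet.2 h), hL, hN,
    and_true]

theorem isTrivalentLeafTree_subdivide (hG : IsTrivalentLeafTree (k + 2) G) (he : e ∈ G.edgeSet) :
    IsTrivalentLeafTree (k + 1 + 2) (subdivide G e) := by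
  induction e using Sym2.ind
  exact (isTrivalentLeafTree_subdivide_iff he).2 hG

def contract (G' : SimpleGraph (Vert (k + 1))) : SimpleGraph (Vert k) where
  Adj u v := u ≠ v ∧
    (G'.Adj (up u) (up v) ∨ G'.Adj (newNode k) (up u) ∧ G'.Adj (newNode k) (up v))
  symm := ⟨fun _ _ ⟨huv, h⟩ ↦ ⟨huv.symm, h.imp (fun h ↦ h.symm) And.symm⟩⟩
  loopless := ⟨fun _ h ↦ h.1 rfl⟩

@[simp] theorem contract_adj {G' : SimpleGraph (Vert (k + 1))} {u v : Vert k} :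
    (contract G').Adj u v ↔ u ≠ v ∧
      (G'.Adj (up u) (up v) ∨ G'.Adj (newNode k) (up u) ∧ G'.Adj (newNode k) (up v)) :=
  Iff.rfl

theorem contract_subdivide (he : e ∈ G.edgeSet) : contract (subdivide G e) = G := by
  ext u v
  simp only [contract_adj, subdivide_adj_up_up, subdivide_adj_newNode, up_inj, exists_eq_right,
    up_ne_newLeaf, false_or]
  by_cases huv : u = v
  · simp [huv]
  rw [Sym2.mem_and_mem_iff huv]
  by_cases h : s(u, v) = e
  · simpa [huv, ← h] using he
  · simp [huv, h, Ne.symm h]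

variable {G' : SimpleGraph (Vert (k + 1))}

theorem subdivide_contract {a b : Vert k}
    (hL : G'.neighborSet (newLeaf k) = {newNode k})
    (hN : G'.neighborSet (newNode k) = {newLeaf k, up a, up b})
    (hab : ¬ G'.Adj (up a) (up b)) : subdivide (contract G') s(a, b) = G' := by
  have hL' : ∀ q, G'.Adj (newLeaf k) q ↔ q = newNode k := fun q ↦ by
    rw [← mem_neighborSet, hL, Set.mem_singleton_iff]
  have hN' : ∀ q, G'.Adj (newNode k) q ↔ q = newLeaf k ∨ q = up a ∨ q = up b := fun q ↦ by
    rw [← mem_neighborSet, hN]; rfl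
  ext p q
  rcases eq_newLeaf_or_eq_newNode_or_eq_up p with rfl | rfl | ⟨u, rfl⟩ <;>
  rcases eq_newLeaf_or_eq_newNode_or_eq_up q with rfl | rfl | ⟨v, rfl⟩
  all_goals simp [hL', hN', adj_comm _ (up _) (newLeaf k), adj_comm _ (up _) (newNode k)]
  constructor
  · rintro ⟨⟨huv, h | ⟨hu, hv⟩⟩, hab', hba'⟩
    · exact h
    · rcases hu with rfl | rfl <;> rcases hv with rfl | rfl <;> simp_all
  · intro h
    refine ⟨⟨fun huv ↦ G'.loopless.irrefl _ (huv ▸ h), .inl h⟩, ?_, ?_⟩ <;> rintro rfl rfl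
    exacts [hab h, hab h.symm]

theorem exists_subdivide_eq (hG' : IsTrivalentLeafTree (k + 1 + 2) G')
    (h : G'.Adj (newLeaf k) (newNode k)) :
    ∃ (G : SimpleGraph (Vert k)) (a b : Vert k), G.Adj a b ∧ subdivide G s(a, b) = G' := by
  obtain ⟨htree, hleaf, hint⟩ := isTrivalentLeafTree_iff.1 hG'
  have hL : G'.neighborSet (newLeaf k) = {newNode k} :=
    (Set.ncard_le_one_iff_subsingleton.1 (hleaf _).le).eq_singleton_of_mem h
  have hNL : newLeaf k ∈ G'.neighborSet (newNode k) := h.symm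
  obtain ⟨p, q, hpq, hpq'⟩ := Set.ncard_eq_two.1 <| by
    rw [Set.ncard_sdiff_singleton_of_mem hNL]
    exact congrArg (· - 1) (hint (Fin.last _))
  have hup : ∀ r ∈ G'.neighborSet (newNode k) \ {newLeaf k}, ∃ v, up v = r :=
    fun r ⟨hr, hrL⟩ ↦ exists_up_eq hrL (G'.ne_of_adj hr).symm
  obtain ⟨a, rfl⟩ := hup p (by simp [hpq'])
  obtain ⟨b, rfl⟩ := hup q (by simp [hpq'])
  have hN : G'.neighborSet (newNode k) = {newLeaf k, up a, up b} := by
    rw [← hpq', Set.insert_sdiff_singleton, Set.insert_eq_of_mem hNL]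
  have ha : G'.Adj (newNode k) (up a) := by simp [← mem_neighborSet, hN]
  have hb : G'.Adj (newNode k) (up b) := by simp [← mem_neighborSet, hN]
  refine ⟨contract G', a, b, ⟨by simpa using hpq, .inr ⟨ha, hb⟩⟩, subdivide_contract hL hN ?_⟩
  exact htree.isAcyclic.not_adj_of_adj_of_adj ha hb

theorem exists_adj_newLeaf_inr (hG' : IsTrivalentLeafTree (k + 1 + 2) G') :
    ∃ t, G'.Adj (newLeaf k) (inr t) := by
  obtain ⟨htree, hleaf, -⟩ := isTrivalentLeafTree_iff.1 hG'
  obtain ⟨w, hw⟩ := Set.ncard_eq_one.1 (hleaf (Fin.last _))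
  have hLw : G'.Adj (newLeaf k) w := (Set.ext_iff.1 hw w).2 rfl
  rcases w with i | t
  -- otherwise the last leaf and its neighbour `inl i` would form a connected component
  · have hi : G'.neighborSet (inl i) = {newLeaf k} :=
      (Set.ncard_le_one_iff_subsingleton.1 (hleaf i).le).eq_singleton_of_mem hLw.symm
    have hclosed : ∀ p q, G'.Adj p q → p ∈ ({newLeaf k, inl i} : Set _) →
        q ∈ ({newLeaf k, inl i} : Set _) := by
      rintro p q hpq (rfl | rfl)
      · exact .inr ((Set.ext_iff.1 hw q).1 hpq)
      · exact .inl ((Set.ext_iff.1 hi q).1 hpq)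
    have := (htree.connected.preconnected (newLeaf k) (newNode k)).mem_of_forall_adj hclosed
      (.inl rfl)
    simp [newNode, newLeaf] at this
  · exact ⟨t, hLw⟩

theorem exists_iso_adj_newLeaf_newNode (hG' : IsTrivalentLeafTree (k + 1 + 2) G') :
    ∃ (H : SimpleGraph (Vert (k + 1))) (ρ : G' ≃g H),
      ρ.FixesLeaves ∧ H.Adj (newLeaf k) (newNode k) := by
  obtain ⟨t, ht⟩ := exists_adj_newLeaf_inr hG'
  let ρ := Iso.map (Equiv.sumCongr (Equiv.refl _) (Equiv.swap t (Fin.last _))) G'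
  refine ⟨_, ρ, fun _ ↦ rfl, ?_⟩
  simpa [ρ, newLeaf, newNode, Equiv.swap_apply_of_ne_of_ne] using ρ.map_adj_iff.2 ht

noncomputable def liftMap (f : Vert k → Vert k) : Vert (k + 1) → Vert (k + 1) :=
  Function.extend up (up ∘ f) id

@[simp] theorem liftMap_up (f : Vert k → Vert k) (v : Vert k) : liftMap f (up v) = up (f v) :=
  up_injective.extend_apply _ _ v

@[simp] theorem liftMap_newLeaf (f : Vert k → Vert k) : liftMap f (newLeaf k) = newLeaf k :=
  Function.extend_apply' _ _ _ (by simp)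

@[simp] theorem liftMap_newNode (f : Vert k → Vert k) : liftMap f (newNode k) = newNode k :=
  Function.extend_apply' _ _ _ (by simp)

theorem leftInverse_liftMap {f g : Vert k → Vert k} (h : Function.LeftInverse f g) :
    Function.LeftInverse (liftMap f) (liftMap g) := fun p ↦ by
  rcases eq_newLeaf_or_eq_newNode_or_eq_up p with rfl | rfl | ⟨v, rfl⟩ <;> simp [h _]

noncomputable def liftEquiv (φ : Vert k ≃ Vert k) : Vert (k + 1) ≃ Vert (k + 1) where
  toFun := liftMap φ
  invFun := liftMap φ.symm
  left_inv := leftInverse_liftMap φ.left_inv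
  right_inv := leftInverse_liftMap φ.right_inv

variable {T T' : SimpleGraph (Vert k)}

noncomputable def subdivideIso (φ : T ≃g T') (e : Sym2 (Vert k)) :
    subdivide T e ≃g subdivide T' (e.map φ) where
  toEquiv := liftEquiv φ.toEquiv
  map_rel_iff' {p q} := by
    rcases eq_newLeaf_or_eq_newNode_or_eq_up p with rfl | rfl | ⟨u, rfl⟩ <;>
    rcases eq_newLeaf_or_eq_newNode_or_eq_up q with rfl | rfl | ⟨v, rfl⟩
    all_goals simp [liftEquiv, -Sum.exists]
    rw [← Sym2.map_mk, (Sym2.map.injective φ.injective).eq_iff, φ.map_adj_iff]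

theorem fixesLeaves_subdivideIso {φ : T ≃g T'} (hφ : φ.FixesLeaves) (e : Sym2 (Vert k)) :
    (subdivideIso φ e).FixesLeaves := by
  intro i
  rcases Fin.eq_castSucc_or_eq_last i with ⟨j, rfl⟩ | rfl
  · change liftMap φ (up (inl j)) = up (inl j)
    simp [hφ j]
  · exact liftMap_newLeaf _

theorem exists_subdivide_iso (φ : T ≃g T') (hφ : φ.FixesLeaves)
    {e' : Sym2 (Vert k)} (h : e.map φ = e') :
    ∃ χ : subdivide T e ≃g subdivide T' e', χ.FixesLeaves := by
  subst h
  exact ⟨_, fixesLeaves_subdivideIso hφ e⟩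

section Restrict

variable (ψ : Vert (k + 1) ≃ Vert (k + 1)) (hL : ψ (newLeaf k) = newLeaf k)
  (hN : ψ (newNode k) = newNode k)

include hL hN in
theorem up_down_apply_up (x v : Vert k) : up (down x (ψ (up v))) = ψ (up v) := by
  obtain ⟨w, hw⟩ := exists_up_eq (p := ψ (up v))
    (fun h ↦ up_ne_newLeaf v (ψ.injective (h.trans hL.symm)))
    (fun h ↦ up_ne_newNode v (ψ.injective (h.trans hN.symm)))
  rw [← hw, down_up]

/-- The default `inl 0` of `down` is never used, since `ψ` permutes the range of `up`. -/
noncomputable def restrictEquiv : Vert k ≃ Vert k where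
  toFun v := down (inl 0) (ψ (up v))
  invFun v := down (inl 0) (ψ.symm (up v))
  left_inv v := by simp [up_down_apply_up ψ hL hN]
  right_inv v := by
    simp [up_down_apply_up ψ.symm (ψ.symm_apply_eq.2 hL.symm) (ψ.symm_apply_eq.2 hN.symm)]

theorem up_restrictEquiv (v : Vert k) : up (restrictEquiv ψ hL hN v) = ψ (up v) :=
  up_down_apply_up ψ hL hN _ v

end Restrict

variable {G₁ G₂ : SimpleGraph (Vert (k + 1))}

theorem exists_contract_iso (ψ : G₁ ≃g G₂) (hψ : ψ.FixesLeaves)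
    (hN : ψ (newNode k) = newNode k) :
    ∃ φ : contract G₁ ≃g contract G₂, φ.FixesLeaves ∧ ∀ v, ψ (up v) = up (φ v) := by
  have hL : ψ (newLeaf k) = newLeaf k := hψ _
  let f := restrictEquiv ψ.toEquiv hL hN
  have hf : ∀ v, up (f v) = ψ (up v) := up_restrictEquiv ψ.toEquiv hL hN
  refine ⟨⟨f, fun {u v} ↦ ?_⟩, fun i ↦ up_injective ?_, fun v ↦ (hf v).symm⟩
  · simp only [contract_adj, hf, f.injective.ne_iff]
    rw [← hN, ψ.map_adj_iff, ψ.map_adj_iff, ψ.map_adj_iff, hN]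
  · simp [hf, up_inl, hψ _]

variable {e' : Sym2 (Vert k)}

theorem subdivide_iso_apply_newNode (ψ : subdivide T e ≃g subdivide T' e')
    (hψ : ψ.FixesLeaves) : ψ (newNode k) = newNode k := by
  have h := ψ.map_adj_iff.2 (subdivide_adj_newLeaf.2 rfl : (subdivide T e).Adj _ (newNode k))
  rwa [show ψ (newLeaf k) = newLeaf k from hψ _, subdivide_adj_newLeaf] at h

theorem exists_iso_of_subdivide_iso (he : e ∈ T.edgeSet) (he' : e' ∈ T'.edgeSet)
    (ψ : subdivide T e ≃g subdivide T' e') (hψ : ψ.FixesLeaves) :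
    ∃ φ : T ≃g T', φ.FixesLeaves ∧ (∀ v, ψ (up v) = up (φ v)) ∧ e.map φ = e' := by
  have hN := subdivide_iso_apply_newNode ψ hψ
  have h := exists_contract_iso ψ hψ hN
  rw [contract_subdivide he, contract_subdivide he'] at h
  obtain ⟨φ, hφ, hup⟩ := h
  have hmem : ∀ z, φ z ∈ e' ↔ z ∈ e := fun z ↦ by
    simpa [hN, hup] using ψ.map_adj_iff (v := up z) (w := newNode k)
  refine ⟨φ, hφ, hup, Sym2.ext fun w ↦ ?_⟩
  rw [Sym2.mem_map]
  exact ⟨fun ⟨z, hz, hw⟩ ↦ hw ▸ (hmem z).2 hz,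
    fun hw ↦ ⟨φ.symm w, (hmem _).1 (by simpa using hw), by simp⟩⟩

theorem apply_eq_self_of_fixesLeaves {G : SimpleGraph (Vert k)}
    (hG : IsTrivalentLeafTree (k + 2) G) (ψ : G ≃g G) (hψ : ψ.FixesLeaves) (v : Vert k) :
    ψ v = v := by
  induction k with
  | zero =>
    rcases v with i | j
    exacts [hψ i, j.elim0]
  | succ k ih =>
    -- after relabelling, `G` subdivides a smaller tree `S`, on which `ψ` induces a leaf-fixing
    -- automorphism; that one is the identity, and `ψ` is determined by it
    obtain ⟨H, ρ, hρ, hadj⟩ := exists_iso_adj_newLeaf_newNode hG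
    obtain ⟨S, a, b, hab, rfl⟩ := exists_subdivide_eq (hG.of_iso ρ hρ) hadj
    have hS := (isTrivalentLeafTree_subdivide_iff hab).1 (hG.of_iso ρ hρ)
    let ψ' := ρ.symm.trans (ψ.trans ρ)
    have hψ' : FixesLeaves ψ' := hρ.symm.trans (hψ.trans hρ)
    obtain ⟨φ, hφ, hup, -⟩ := exists_iso_of_subdivide_iso hab hab ψ' hψ'
    have hfix : ∀ p, ψ' p = p := fun p ↦ by
      rcases eq_newLeaf_or_eq_newNode_or_eq_up p with rfl | rfl | ⟨w, rfl⟩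
      · exact hψ' _
      · exact subdivide_iso_apply_newNode ψ' hψ'
      · rw [hup, ih hS φ hφ]
    simpa [ψ'] using congrArg ρ.symm (hfix (ρ v))

end Vert

open Vert

noncomputable def subdivideClass (k : ℕ) :
    (Σ c : Quot (LeafLabelledIso (k + 2)), c.out.1.edgeSet) → Quot (LeafLabelledIso (k + 1 + 2)) :=
  fun ⟨c, e⟩ ↦ Quot.mk _ ⟨subdivide c.out.1 e.1, isTrivalentLeafTree_subdivide c.out.2 e.2⟩

theorem subdivideClass_surjective (k : ℕ) : Function.Surjective (subdivideClass k) := by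
  rintro ⟨G', hG'⟩
  obtain ⟨H, ρ, hρ, hadj⟩ := exists_iso_adj_newLeaf_newNode hG'
  obtain ⟨S, a, b, hab, rfl⟩ := exists_subdivide_eq (hG'.of_iso ρ hρ) hadj
  have hS := (isTrivalentLeafTree_subdivide_iff hab).1 (hG'.of_iso ρ hρ)
  obtain ⟨ξ, hξ⟩ := quot_mk_leafLabelledIso_eq_iff.1 (Quot.out_eq (Quot.mk _ ⟨S, hS⟩))
  obtain ⟨χ, hχ⟩ := exists_subdivide_iso ξ hξ (e := s(a, b).map ξ.symm) (e' := s(a, b)) (by simp)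
  have he : s(a, b).map ξ.symm ∈ edgeSet _ := ξ.symm.map_mem_edgeSet_iff.2 (S.mem_edgeSet.2 hab)
  exact ⟨⟨_, _, he⟩, quot_mk_leafLabelledIso_eq_iff.2 ⟨χ.trans ρ.symm, hχ.trans hρ.symm⟩⟩

theorem subdivideClass_injective (k : ℕ) : Function.Injective (subdivideClass k) := by
  rintro ⟨c, e, he⟩ ⟨c', e', he'⟩ h
  obtain ⟨ψ, hψ⟩ := quot_mk_leafLabelledIso_eq_iff.1 h
  obtain ⟨φ, hφ, -, hee'⟩ := exists_iso_of_subdivide_iso he he' ψ hψ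
  obtain rfl : c = c' := by
    rw [← Quot.out_eq c, ← Quot.out_eq c']
    exact quot_mk_leafLabelledIso_eq_iff.2 ⟨φ, hφ⟩
  have hid : ⇑φ = id := funext (apply_eq_self_of_fixesLeaves c.out.2 φ hφ)
  obtain rfl : e = e' := by simpa [hid] using hee'
  rfl

theorem card_quot_leafLabelledIso_succ (k : ℕ) : Nat.card (Quot (LeafLabelledIso (k + 1 + 2))) =
    (2 * k + 1) * Nat.card (Quot (LeafLabelledIso (k + 2))) := by
  have := Fintype.ofFinite (Quot (LeafLabelledIso (k + 2)))
  rw [← Nat.card_eq_of_bijective _ ⟨subdivideClass_injective k, subdivideClass_surjective k⟩,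
    Nat.card_sigma, Finset.sum_congr rfl fun c _ ↦ card_edgeSet_of_isTree c.out.2.1,
    Finset.sum_const, smul_eq_mul, mul_comm, Finset.card_univ, Nat.card_eq_fintype_card]

theorem isTrivalentLeafTree_two_top : IsTrivalentLeafTree 2 (⊤ : SimpleGraph (Vert 0)) := by
  refine ⟨isTree_iff_connected_and_card.2 ⟨connected_top, ?_⟩, fun i ↦ ?_, fun j ↦ j.elim0⟩
  · classical
    rw [Vert.card, Nat.card_eq_fintype_card, ← edgeFinset_card,
      card_edgeFinset_top_eq_card_choose_two]
    rfl
  · classical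
    rw [neighborSet_top, Set.ncard_eq_toFinset_card', Set.toFinset_compl, Finset.card_compl]
    rfl

theorem eq_top_of_isTrivalentLeafTree_two {G : SimpleGraph (Vert 0)}
    (hG : IsTrivalentLeafTree 2 G) : G = ⊤ := by
  obtain ⟨w, hw⟩ := Set.ncard_eq_one.1 (hG.2.1 0)
  have h01 : G.Adj (inl 0) (inl 1) := by
    have h0w : G.Adj (inl 0) w := (Set.ext_iff.1 hw w).2 rfl
    rcases w with i | j
    · fin_cases i
      exacts [absurd h0w (G.loopless.irrefl _), h0w]
    · exact j.elim0
  ext p q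
  rcases p with i | j
  · rcases q with i' | j'
    · fin_cases i <;> fin_cases i' <;> simp [h01, h01.symm]
    · exact j'.elim0
  · exact j.elim0

theorem card_quot_leafLabelledIso_two : Nat.card (Quot (LeafLabelledIso 2)) = 1 := by
  rw [Nat.card_eq_one_iff_unique]
  refine ⟨⟨?_⟩, ⟨Quot.mk _ ⟨⊤, isTrivalentLeafTree_two_top⟩⟩⟩
  rintro ⟨G, hG⟩ ⟨H, hH⟩
  obtain rfl := eq_top_of_isTrivalentLeafTree_two hG
  obtain rfl := eq_top_of_isTrivalentLeafTree_two hH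
  rfl

/-- The number of combinatorially distinct trivalent trees with `m ≥ 3` labelled
external legs equals the double factorial `(2m - 5)!!`. -/
theorem card_trivalent_trees (m : ℕ) (hm : 3 ≤ m) :
    Nat.card (Quot (LeafLabelledIso m)) = Nat.doubleFactorial (2 * m - 5) := by
  obtain ⟨k, rfl⟩ : ∃ k, m = k + 3 := ⟨m - 3, by omega⟩
  rw [show 2 * (k + 3) - 5 = 2 * k + 1 by omega]
  clear hm
  induction k with
  | zero => rw [card_quot_leafLabelledIso_succ, card_quot_leafLabelledIso_two]; rfl
  | succ k ih =>
    rw [card_quot_leafLabelledIso_succ, ih, show 2 * (k + 1) + 1 = 2 * k + 1 + 2 by ring,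
      Nat.doubleFactorial_add_two]
end

section
/- Let G(ζ) be the genus-one string Green function with modulus τ = τ₁ + iτ₂. Along the family τ_{α'} = τ₁ + iT/α' and ζ_{α'} = x + iX/α' with 0 < X < T, one has lim_{α'→0} α' G(ζ_{α'}) = π(−X + X²/T), where G(ζ) = (π (Im ζ)²)/Im τ − (1/2) ln|sin(πζ)/π|² − 2 Σ_{m≥1} [ (q^m/(1−q^m)) sin²(mπζ)/m + c.c. ] and q = e^{2πiτ}. -/
/-!
Since `sin z = e^{-iz} (1 - e^{2iz}) i / 2`, we have `‖sin z‖ e^{-Im z} → 1/2` as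
`Im z → ∞`; hence `α' log ‖sin (πζ_{α'}) / π‖ = πX + α' O(1) → πX`. The `m`-th term of the
`q`-series is at most `4 ρ^m` with `ρ = |q| e^{2 |Im πζ|} = e^{-2π(T - X)/α'}`, so the series
is `O(ρ)` and vanishes in the limit precisely because `X < T`. The first term times `α'` is
identically `πX²/T`.
-/

open Filter Topology Complex
open scoped Real

/-- The genus-one string Green function, with modulus `τ` and point `ζ`:
`G(ζ) = π (Im ζ)²/Im τ - (1/2) ln|sin(πζ)/π|² - 2 Σ_{m≥1} [q^m/(1-q^m) sin²(mπζ)/m + c.c.]`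
where `q = e^{2πiτ}` and the `+ c.c.` makes each summand twice the real part. -/
noncomputable def genusOneGreen (τ ζ : ℂ) : ℝ :=
  Real.pi * (ζ.im) ^ 2 / τ.im
    - (1 / 2) * Real.log ((‖Complex.sin ((Real.pi : ℂ) * ζ) / (Real.pi : ℂ)‖) ^ 2)
    - 2 * ∑' m : ℕ+, (1 / (m : ℝ)) *
        (2 * ((Complex.exp (2 * (Real.pi : ℂ) * Complex.I * τ) ^ (m : ℕ) /
              (1 - Complex.exp (2 * (Real.pi : ℂ) * Complex.I * τ) ^ (m : ℕ)) *
            Complex.sin ((m : ℂ) * (Real.pi : ℂ) * ζ) ^ 2).re))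

namespace Complex

theorem norm_exp_neg_mul_I (z : ℂ) : ‖cexp (-z * I)‖ = Real.exp z.im := by
  simp [norm_exp]

theorem norm_exp_two_pi_mul_I_mul (τ : ℂ) :
    ‖cexp (2 * π * I * τ)‖ = Real.exp (-(2 * π * τ.im)) := by
  simp [norm_exp]

theorem norm_sin_le_exp_abs_im (z : ℂ) : ‖sin z‖ ≤ Real.exp |z.im| := by
  have h₁ : ‖cexp (-z * I)‖ ≤ Real.exp |z.im| := by
    rw [norm_exp_neg_mul_I]; exact Real.exp_le_exp.2 (le_abs_self _)
  have h₂ : ‖cexp (z * I)‖ ≤ Real.exp |z.im| := by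
    rw [norm_exp]; simpa using neg_le_abs z.im
  calc ‖sin z‖ = ‖cexp (-z * I) - cexp (z * I)‖ / 2 := by simp [sin]
    _ ≤ (‖cexp (-z * I)‖ + ‖cexp (z * I)‖) / 2 := by gcongr; exact norm_sub_le _ _
    _ ≤ Real.exp |z.im| := by linarith

theorem norm_sin_eq_exp_im_mul (z : ℂ) :
    ‖sin z‖ = Real.exp z.im * ‖1 - cexp (2 * I * z)‖ / 2 := by
  have h : cexp (-z * I) - cexp (z * I) = cexp (-z * I) * (1 - cexp (2 * I * z)) := by
    rw [mul_sub, mul_one, ← exp_add]; ring_nf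
  rw [sin, norm_div, norm_mul, h, norm_mul, norm_exp_neg_mul_I]
  simp

theorem tendsto_norm_sin_mul_exp_neg_im :
    Tendsto (fun z => ‖sin z‖ * Real.exp (-z.im)) (comap im atTop) (𝓝 (1 / 2)) := by
  have hexp : Tendsto (fun z => cexp (2 * I * z)) (comap im atTop) (𝓝 0) := by
    rw [tendsto_zero_iff_norm_tendsto_zero]
    have : Tendsto (fun z : ℂ => 2 * z.im) (comap im atTop) atTop :=
      tendsto_comap.const_mul_atTop two_pos
    refine (Real.tendsto_exp_neg_atTop_nhds_zero.comp this).congr fun z => ?_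
    simp [norm_exp]
  have hlim : Tendsto (fun z => ‖1 - cexp (2 * I * z)‖ / 2) (comap im atTop) (𝓝 (1 / 2)) := by
    simpa using ((tendsto_const_nhds (x := (1 : ℂ))).sub hexp).norm.div_const 2
  refine hlim.congr fun z => ?_
  rw [norm_sin_eq_exp_im_mul, Real.exp_neg]
  field_simp

end Complex

theorem norm_div_one_sub_le {𝕜 : Type*} [NormedDivisionRing 𝕜] [NormOneClass 𝕜] {q : 𝕜}
    (hq : ‖q‖ ≤ 1 / 2) : ‖q / (1 - q)‖ ≤ 2 * ‖q‖ := by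
  have h : 1 / 2 ≤ ‖1 - q‖ := by
    have := norm_sub_norm_le (1 : 𝕜) q
    rw [norm_one] at this
    linarith
  rw [norm_div, div_le_iff₀ (by linarith)]
  nlinarith [norm_nonneg q]

noncomputable def greenQTerm (q w : ℂ) (m : ℕ+) : ℝ :=
  (1 / (m : ℝ)) * (2 * (q ^ (m : ℕ) / (1 - q ^ (m : ℕ)) * sin (m * w) ^ 2).re)

theorem genusOneGreen_eq (τ ζ : ℂ) :
    genusOneGreen τ ζ = π * ζ.im ^ 2 / τ.im - Real.log ‖sin (π * ζ) / π‖
      - 2 * ∑' m, greenQTerm (cexp (2 * π * I * τ)) (π * ζ) m := by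
  simp only [genusOneGreen, greenQTerm, Real.log_pow, mul_assoc]
  ring

theorem abs_greenQTerm_le {q : ℂ} (hq : ‖q‖ ≤ 1 / 2) (w : ℂ) (m : ℕ+) :
    |greenQTerm q w m| ≤ 4 * (‖q‖ * Real.exp (2 * |w.im|)) ^ (m : ℕ) := by
  have hqm : ‖q ^ (m : ℕ)‖ ≤ 1 / 2 :=
    (norm_pow_le' q m.pos).trans (pow_le_of_le_one (norm_nonneg q) (hq.trans (by norm_num))
      m.ne_zero |>.trans hq)
  have hsin : ‖sin (m * w) ^ 2‖ ≤ Real.exp (2 * |w.im|) ^ (m : ℕ) := by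
    calc ‖sin (m * w) ^ 2‖ = ‖sin (m * w)‖ ^ 2 := norm_pow _ _
      _ ≤ Real.exp |(m * w).im| ^ 2 := by gcongr; exact norm_sin_le_exp_abs_im _
      _ = Real.exp (2 * |w.im|) ^ (m : ℕ) := by
        rw [← Real.exp_nat_mul, ← Real.exp_nat_mul, ← ofReal_natCast, im_ofReal_mul, abs_mul,
          Nat.abs_cast]
        push_cast
        congr 1; ring
  have hm : 1 / (m : ℝ) ≤ 1 := by
    rw [div_le_one (by positivity)]; exact_mod_cast m.pos
  calc |greenQTerm q w m|
      = 1 / (m : ℝ) * (2 * |(q ^ (m : ℕ) / (1 - q ^ (m : ℕ)) * sin (m * w) ^ 2).re|) := by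
        rw [greenQTerm, abs_mul, abs_mul, abs_of_pos (by positivity), abs_two]
    _ ≤ 1 * (2 * (2 * ‖q‖ ^ (m : ℕ) * Real.exp (2 * |w.im|) ^ (m : ℕ))) := by
        gcongr
        refine (abs_re_le_norm _).trans ?_
        rw [norm_mul]
        gcongr
        simpa [norm_pow] using norm_div_one_sub_le hqm
    _ = 4 * (‖q‖ * Real.exp (2 * |w.im|)) ^ (m : ℕ) := by ring

theorem abs_tsum_greenQTerm_le {q w : ℂ} (h : ‖q‖ * Real.exp (2 * |w.im|) ≤ 1 / 2) :
    |∑' m, greenQTerm q w m| ≤ 8 * (‖q‖ * Real.exp (2 * |w.im|)) := by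
  set ρ := ‖q‖ * Real.exp (2 * |w.im|)
  have hρ : 0 ≤ ρ := by positivity
  have hq : ‖q‖ ≤ 1 / 2 :=
    (le_mul_of_one_le_right (norm_nonneg q) (Real.one_le_exp (by positivity))).trans h
  have hsum : HasSum (fun m : ℕ+ => 4 * ρ ^ (m : ℕ)) (4 * ρ * (1 - ρ)⁻¹) := by
    rw [hasSum_pnat_iff_hasSum_succ (f := fun n => 4 * ρ ^ n)]
    refine ((hasSum_geometric_of_lt_one hρ (by linarith)).mul_left (4 * ρ)).congr_fun fun n => ?_
    ring
  calc |∑' m, greenQTerm q w m| = ‖∑' m, greenQTerm q w m‖ := (Real.norm_eq_abs _).symm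
    _ ≤ 4 * ρ * (1 - ρ)⁻¹ := tsum_of_norm_bounded hsum (abs_greenQTerm_le hq w)
    _ ≤ 4 * ρ * 2 := by
        gcongr
        rw [inv_le_comm₀ (by linarith) two_pos]
        linarith
    _ = 8 * ρ := by ring

theorem tendsto_tsum_greenQTerm_zero {α : Type*} {l : Filter α} {q w : α → ℂ}
    (h : Tendsto (fun i => ‖q i‖ * Real.exp (2 * |(w i).im|)) l (𝓝 0)) :
    Tendsto (fun i => ∑' m, greenQTerm (q i) (w i) m) l (𝓝 0) := by
  refine squeeze_zero_norm' ?_ (by simpa using h.const_mul 8)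
  filter_upwards [h.eventually_le_const (by norm_num : (0 : ℝ) < 1 / 2)] with i hi
  exact abs_tsum_greenQTerm_le hi

theorem tendsto_const_div_nhdsGT_zero_atTop {c : ℝ} (hc : 0 < c) :
    Tendsto (fun a : ℝ => c / a) (𝓝[>] 0) atTop := by
  simpa only [div_eq_mul_inv] using tendsto_inv_nhdsGT_zero.const_mul_atTop hc

theorem tendsto_mul_log_norm_sin_div {z : ℝ → ℂ} {c : ℝ} (hc : 0 < c)
    (hz : ∀ a, (z a).im = c / a) {b : ℂ} (hb : b ≠ 0) :
    Tendsto (fun a => a * Real.log ‖sin (z a) / b‖) (𝓝[>] 0) (𝓝 c) := by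
  set P : ℝ → ℝ := fun a => ‖sin (z a)‖ * Real.exp (-(z a).im)
  have hP : Tendsto P (𝓝[>] 0) (𝓝 (1 / 2)) :=
    tendsto_norm_sin_mul_exp_neg_im.comp <| tendsto_comap_iff.2 <| by
      simpa only [Function.comp_def, hz] using tendsto_const_div_nhdsGT_zero_atTop hc
  have hid : Tendsto (fun a : ℝ => a) (𝓝[>] 0) (𝓝 0) := nhdsWithin_le_nhds
  have hlim : Tendsto (fun a => a * Real.log (P a) + c - a * Real.log ‖b‖) (𝓝[>] 0) (𝓝 c) := by
    simpa using ((hid.mul (hP.log (by norm_num))).add_const c).sub (hid.mul_const _)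
  refine hlim.congr' ?_
  filter_upwards [self_mem_nhdsWithin, hP.eventually_const_lt (by norm_num : (0 : ℝ) < 1 / 2)]
    with a (ha : 0 < a) hPa
  have hsin : ‖sin (z a)‖ ≠ 0 := fun h => by simp [P, h] at hPa
  rw [Real.log_mul hsin (Real.exp_ne_zero _), Real.log_exp, norm_div,
    Real.log_div hsin (norm_ne_zero_iff.2 hb), hz]
  field_simp
  ring

theorem tendsto_norm_exp_mul_exp_abs_im_nhdsGT_zero {τ w : ℝ → ℂ} {T X : ℝ}
    (hτ : ∀ a, (τ a).im = T / a) (hw : ∀ a, (w a).im = π * X / a) (hX : 0 < X) (hXT : X < T) :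
    Tendsto (fun a => ‖cexp (2 * π * I * τ a)‖ * Real.exp (2 * |(w a).im|)) (𝓝[>] 0) (𝓝 0) := by
  refine (Real.tendsto_exp_neg_atTop_nhds_zero.comp <| tendsto_const_div_nhdsGT_zero_atTop
    (c := 2 * π * (T - X)) (by nlinarith [Real.pi_pos])).congr' ?_
  filter_upwards [self_mem_nhdsWithin] with a (ha : 0 < a)
  rw [norm_exp_two_pi_mul_I_mul, hτ, hw, abs_of_pos (by positivity), ← Real.exp_add,
    Function.comp_apply]
  congr 1; ring

theorem tropical_limit_genus_one_green_function_general (T X x τ₁ : ℝ)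
    (hX : 0 < X) (hXT : X < T) :
    Tendsto (fun a : ℝ =>
        a * genusOneGreen ((τ₁ : ℂ) + ((T / a : ℝ) : ℂ) * Complex.I)
              ((x : ℂ) + ((X / a : ℝ) : ℂ) * Complex.I))
      (nhdsWithin 0 (Set.Ioi 0))
      (nhds (Real.pi * (-X + X ^ 2 / T))) := by
  set τ : ℝ → ℂ := fun a => τ₁ + ((T / a : ℝ) : ℂ) * I
  set ζ : ℝ → ℂ := fun a => x + ((X / a : ℝ) : ℂ) * I
  have hτ : ∀ a, (τ a).im = T / a := fun a => by simp [τ]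
  have hζ : ∀ a, (ζ a).im = X / a := fun a => by simp [ζ]
  have hπζ : ∀ a, (π * ζ a).im = π * X / a := fun a => by
    rw [im_ofReal_mul, hζ, mul_div_assoc]
  have hid : Tendsto (fun a : ℝ => a) (𝓝[>] 0) (𝓝 0) := nhdsWithin_le_nhds
  have hlog := tendsto_mul_log_norm_sin_div (by positivity) hπζ (ofReal_ne_zero.2 Real.pi_ne_zero)
  have hseries := hid.mul <| tendsto_tsum_greenQTerm_zero <|
    tendsto_norm_exp_mul_exp_abs_im_nhdsGT_zero hτ hπζ hX hXT
  have hlim : Tendsto (fun a => π * X ^ 2 / T - a * Real.log ‖sin (π * ζ a) / π‖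
      - 2 * (a * ∑' m, greenQTerm (cexp (2 * π * I * τ a)) (π * ζ a) m))
      (𝓝[>] 0) (𝓝 (π * (-X + X ^ 2 / T))) := by
    convert (tendsto_const_nhds.sub hlog).sub (hseries.const_mul 2) using 2
    ring
  refine hlim.congr' ?_
  filter_upwards [self_mem_nhdsWithin] with a (ha : 0 < a)
  have hquad : a * (π * (ζ a).im ^ 2 / (τ a).im) = π * X ^ 2 / T := by
    rw [hζ, hτ]
    field_simp
  rw [genusOneGreen_eq, ← hquad]
  ring

/-- Tropical limit of the genus-one string Green function: along the family
`τ_{α'} = τ₁ + i T/α'`, `ζ_{α'} = x + i X/α'` with `0 < X < T`, one has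
`lim_{α'→0⁺} α' G(ζ_{α'}) = π(-X + X²/T)`. -/
theorem tropical_limit_genus_one_green_function (T X x τ₁ : ℝ)
    (hT : 0 < T) (hX : 0 < X) (hXT : X < T) :
    Tendsto (fun a : ℝ =>
        a * genusOneGreen ((τ₁ : ℂ) + ((T / a : ℝ) : ℂ) * Complex.I)
              ((x : ℂ) + ((X / a : ℝ) : ℂ) * Complex.I))
      (nhdsWithin 0 (Set.Ioi 0))
      (nhds (Real.pi * (-X + X ^ 2 / T))) :=
  tropical_limit_genus_one_green_function_general T X x τ₁ hX hXT
end
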